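/- In misère Partizan Kayles, a position consisting of k strips of length 1 and j strips of length 2 with k > j has outcome R: Right wins regardless of who moves first. -/

import Mathlib

/-- Add a strip of length `k` to a position (strips of length 0 are discarded). -/
def addStrip (m : Multiset ℕ) (k : ℕ) : Multiset ℕ := if k = 0 then m else k ::ₘ m

/-- Left removes one square from a strip of length `n ≥ 1`, leaving strips `i` and `n-1-i`. -/
def LeftMove (G G' : Multiset ℕ) : Prop :=
  ∃ n ∈ G, ∃ i, i + 1 ≤ n ∧ G' = addStrip (addStrip (G.erase n) i) (n - 1 - i)

/-- Right removes two adjacent squares from a strip of length `n ≥ 2`, leaving `i` and `n-2-i`. -/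
def RightMove (G G' : Multiset ℕ) : Prop :=
  ∃ n ∈ G, ∃ i, i + 2 ≤ n ∧ G' = addStrip (addStrip (G.erase n) i) (n - 2 - i)

mutual
  /-- Misère play: Left, to move, wins (a player unable to move wins). -/
  inductive LeftWinsMover : Multiset ℕ → Prop
    | cannot (G : Multiset ℕ) : (¬ ∃ G', LeftMove G G') → LeftWinsMover G
    | move (G G' : Multiset ℕ) : LeftMove G G' → LeftWinsWaiter G' → LeftWinsMover G
  /-- Misère play: Left wins with Right to move. -/
  inductive LeftWinsWaiter : Multiset ℕ → Prop
    | intro (G : Multiset ℕ) : (∃ G', RightMove G G') →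
        (∀ G', RightMove G G' → LeftWinsMover G') → LeftWinsWaiter G
end

inductive Outcome | L | N | P | R
  deriving DecidableEq

open Classical in
/-- The misère outcome `o⁻(G)`. -/
noncomputable def outcome (G : Multiset ℕ) : Outcome :=
  if LeftWinsMover G then (if LeftWinsWaiter G then Outcome.L else Outcome.N)
  else (if LeftWinsWaiter G then Outcome.P else Outcome.R)

/-- The partial order on outcomes: `L` greatest, `R` least, `N` and `P` incomparable. -/
def Outcome.le (a b : Outcome) : Prop := a = b ∨ a = Outcome.R ∨ b = Outcome.L

/-- `pos k j` is the position `kS₁ + jS₂`. -/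
def pos (k j : ℕ) : Multiset ℕ := Multiset.replicate k 1 + Multiset.replicate j 2

/-!
Left's moves on `kS₁ + jS₂` delete an `S₁` or shrink an `S₂` to an `S₁`; Right's moves delete an
`S₂`. So if `j < k` and Left is to move, Left has a move, and every one leaves `j ≤ k` with Right to
move; Right then either cannot move (and wins) or deletes an `S₂`, restoring `j < k`. The induction
runs on `k + 2j`, which every move lowers.
-/

lemma pos_succ_ones (k j : ℕ) : pos (k + 1) j = 1 ::ₘ pos k j := by
  simp [pos, Multiset.replicate_succ, Multiset.cons_add]

lemma pos_succ_twos (k j : ℕ) : pos k (j + 1) = 2 ::ₘ pos k j := by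
  simp [pos, Multiset.replicate_succ, Multiset.add_cons]

lemma mem_pos_iff {a k j : ℕ} : a ∈ pos k j ↔ (a = 1 ∧ k ≠ 0) ∨ (a = 2 ∧ j ≠ 0) := by
  simp only [pos, Multiset.mem_add, Multiset.mem_replicate]
  tauto

lemma leftMove_pos_succ (k j : ℕ) : LeftMove (pos (k + 1) j) (pos k j) :=
  ⟨1, mem_pos_iff.2 (.inl ⟨rfl, k.succ_ne_zero⟩), 0, le_rfl, by
    rw [pos_succ_ones, Multiset.erase_cons_head]; rfl⟩

lemma leftMove_pos_cases {k j : ℕ} {G : Multiset ℕ} (hG : LeftMove (pos k j) G) :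
    (∃ k', k = k' + 1 ∧ G = pos k' j) ∨ (∃ j', j = j' + 1 ∧ G = pos (k + 1) j') := by
  obtain ⟨n, hn, i, hi, rfl⟩ := hG
  rcases mem_pos_iff.1 hn with ⟨rfl, hk⟩ | ⟨rfl, hj⟩
  · obtain ⟨k', rfl⟩ := Nat.exists_eq_add_one_of_ne_zero hk
    obtain rfl : i = 0 := by omega
    refine .inl ⟨k', rfl, ?_⟩
    rw [pos_succ_ones, Multiset.erase_cons_head]; rfl
  · obtain ⟨j', rfl⟩ := Nat.exists_eq_add_one_of_ne_zero hj
    refine .inr ⟨j', rfl, ?_⟩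
    rw [pos_succ_twos, Multiset.erase_cons_head, pos_succ_ones]
    obtain rfl | rfl : i = 0 ∨ i = 1 := by omega
    all_goals rfl

lemma rightMove_pos_cases {k j : ℕ} {G : Multiset ℕ} (hG : RightMove (pos k j) G) :
    ∃ j', j = j' + 1 ∧ G = pos k j' := by
  obtain ⟨n, hn, i, hi, rfl⟩ := hG
  rcases mem_pos_iff.1 hn with ⟨rfl, -⟩ | ⟨rfl, hj⟩
  · omega
  · obtain ⟨j', rfl⟩ := Nat.exists_eq_add_one_of_ne_zero hj
    obtain rfl : i = 0 := by omega
    refine ⟨j', rfl, ?_⟩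
    rw [pos_succ_twos, Multiset.erase_cons_head]; rfl

mutual

theorem not_leftWinsMover_pos {k j : ℕ} (h : j < k) : ¬ LeftWinsMover (pos k j) := by
  rintro (⟨_, hstuck⟩ | ⟨_, G, hmove, hwin⟩)
  · obtain ⟨k', rfl⟩ := Nat.exists_eq_add_one_of_ne_zero (by omega : k ≠ 0)
    exact hstuck ⟨_, leftMove_pos_succ k' j⟩
  · rcases leftMove_pos_cases hmove with ⟨k', rfl, rfl⟩ | ⟨j', rfl, rfl⟩ <;>
      exact not_leftWinsWaiter_pos (by omega) hwin
termination_by k + 2 * j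

theorem not_leftWinsWaiter_pos {k j : ℕ} (h : j ≤ k) : ¬ LeftWinsWaiter (pos k j) := by
  rintro ⟨_, ⟨G, hmove⟩, hwin⟩
  obtain ⟨j', rfl, rfl⟩ := rightMove_pos_cases hmove
  exact not_leftWinsMover_pos (by omega) (hwin _ hmove)
termination_by k + 2 * j

end

theorem kayles_more_ones_than_twos (k j : ℕ) (h : k > j) :
    outcome (pos k j) = Outcome.R := by
  simp [outcome, not_leftWinsMover_pos h, not_leftWinsWaiter_pos h.le]
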